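/- Let S be a ring and C a cochain complex of S-modules. If for every S-module m and every integer n, every chain map Σ^n m → C (with m regarded as a complex concentrated in degree zero) is null homotopic, then C is contractible, i.e., the identity chain map of C is null homotopic. -/

import Mathlib

/-!
Apply the hypothesis to the inclusion of the cocycles `Z^i ⊆ C^i`, viewed as a chain map out of
the module `Z^i` placed in degree `i`. Reading off degree `i` of a null homotopy gives
`σ : Z^i → C^(i-1)` with `d ∘ σ` the inclusion. Then `ρ = 1 - σ ∘ d : C^i → Z^i` retracts the
inclusion, and `s = σ ∘ ρ` is a contracting homotopy: `d s + s d = σ d + ρ = 1`.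
-/

open CategoryTheory

/-- A module viewed as a cochain complex concentrated in degree zero. -/
noncomputable def sing (R : Type) [Ring R] (M : ModuleCat R) :
    CochainComplex (ModuleCat R) ℤ :=
  (HomologicalComplex.single (ModuleCat R) (ComplexShape.up ℤ) 0).obj M

open Limits HomologicalComplex

namespace HomologicalComplex

variable {V : Type*} [Category V] [Preadditive V] [HasZeroObject V]
  {ι : Type*} [DecidableEq ι] {c : ComplexShape ι}

lemma exists_comp_d_eq_of_homotopy_mkHomFromSingle {K : HomologicalComplex V c} {i j : ι}
    (hij : c.Rel i j) {A : V} {φ : A ⟶ K.X j} {hφ : ∀ k, c.Rel j k → φ ≫ K.d j k = 0}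
    (H : Homotopy (mkHomFromSingle φ hφ) 0) :
    ∃ g : A ⟶ K.X i, g ≫ K.d i j = φ := by
  refine ⟨(singleObjXSelf c j A).inv ≫ H.hom j i, ?_⟩
  have hcomm := H.comm j
  have hdNext : dNext j H.hom = 0 := by simp [dNext]
  rw [mkHomFromSingle_f, prevD_eq _ hij, hdNext, zero_add, zero_f, add_zero] at hcomm
  rw [Category.assoc, ← hcomm, Iso.inv_hom_id_assoc]

end HomologicalComplex

namespace CochainComplex

variable {V : Type*} [Category V] [Preadditive V] [CategoryWithHomology V]
  {K : CochainComplex V ℤ} (σ : ∀ i j, (ComplexShape.up ℤ).Rel j i → (K.cycles i ⟶ K.X j))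
  (hσ : ∀ i j (hji : (ComplexShape.up ℤ).Rel j i), σ i j hji ≫ K.d j i = K.iCycles i)

noncomputable def cyclesRetraction (i : ℤ) : K.X i ⟶ K.cycles i :=
  K.liftCycles (𝟙 _ - K.toCycles i (i + 1) ≫ σ (i + 1) i (by simp)) (i + 1) (by simp) (by
    rw [Preadditive.sub_comp, Category.assoc, hσ, toCycles_i, Category.id_comp, sub_self])

lemma cyclesRetraction_iCycles (i : ℤ) :
    cyclesRetraction σ hσ i ≫ K.iCycles i = 𝟙 _ - K.toCycles i (i + 1) ≫ σ (i + 1) i (by simp) :=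
  liftCycles_i ..

lemma d_comp_cyclesRetraction (i : ℤ) :
    K.d i (i + 1) ≫ cyclesRetraction σ hσ (i + 1) = K.toCycles i (i + 1) := by
  rw [← cancel_mono (K.iCycles _), Category.assoc, cyclesRetraction_iCycles, Preadditive.comp_sub,
    Category.comp_id, d_toCycles_assoc, zero_comp, sub_zero, toCycles_i]

noncomputable def homotopyIdZeroOfCyclesLift : Homotopy (𝟙 K) 0 :=
  (Homotopy.ofEq (by
    ext i
    rw [Homotopy.nullHomotopicMap'_f (show (ComplexShape.up ℤ).Rel (i - 1) i by simp)
      (show (ComplexShape.up ℤ).Rel i (i + 1) from rfl), ← Category.assoc,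
      d_comp_cyclesRetraction, Category.assoc]
    simp only [hσ, cyclesRetraction_iCycles, id_f]
    abel)).trans (Homotopy.nullHomotopy' fun i j hji => cyclesRetraction σ hσ i ≫ σ i j hji)

end CochainComplex

section

variable {S : Type} [Ring S] {C : CochainComplex (ModuleCat S) ℤ}

lemma nonempty_homotopy_zero_of_single_obj
    (h : ∀ (m : ModuleCat S) (n : ℤ) (u : (sing S m)⟦n⟧ ⟶ C), Nonempty (Homotopy u 0))
    (d : ℤ) (m : ModuleCat S)
    (v : (single (ModuleCat S) (ComplexShape.up ℤ) d).obj m ⟶ C) : Nonempty (Homotopy v 0) := by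
  -- `(sing S m)⟦-d⟧` is `m` placed in degree `d`
  let e := ((CochainComplex.singleFunctors (ModuleCat S)).shiftIso (-d) d 0 (by omega)).app m
  obtain ⟨H⟩ := h m (-d) (e.hom ≫ v)
  exact ⟨(Homotopy.ofEq (e.inv_hom_id_assoc v).symm).trans
    ((H.compLeft e.inv).trans (Homotopy.ofEq Limits.comp_zero))⟩

lemma exists_comp_d_eq_iCycles
    (h : ∀ (m : ModuleCat S) (n : ℤ) (u : (sing S m)⟦n⟧ ⟶ C), Nonempty (Homotopy u 0))
    (i j : ℤ) (hji : (ComplexShape.up ℤ).Rel j i) :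
    ∃ σ : C.cycles i ⟶ C.X j, σ ≫ C.d j i = C.iCycles i := by
  obtain ⟨H⟩ := nonempty_homotopy_zero_of_single_obj h i (C.cycles i)
    (mkHomFromSingle (C.iCycles i) fun k _ => C.iCycles_d i k)
  exact exists_comp_d_eq_of_homotopy_mkHomFromSingle hji H

end

theorem stmt_8 (S : Type) [Ring S] (C : CochainComplex (ModuleCat S) ℤ)
    (h : ∀ (m : ModuleCat S) (n : ℤ)
      (u : (sing S m)⟦n⟧ ⟶ C), Nonempty (Homotopy u 0)) :
    Nonempty (Homotopy (𝟙 C) 0) := by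
  choose σ hσ using exists_comp_d_eq_iCycles h
  exact ⟨CochainComplex.homotopyIdZeroOfCyclesLift σ hσ⟩
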